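/- Assume each column Xⱼ of X ∈ ℝ^{n×p} satisfies ‖Xⱼ‖₂² = n, that p ≥ 2, that ε ∈ ℝⁿ has independent N(0, σ²) coordinates for some σ > 0, and that y = Xβ* + ε. With λ = 4σ·√(log p / n), let β̂_λ be any minimizer over β ∈ ℝᵖ of the lasso objective (1/n)·‖y − Xβ‖₂² + 2λ·‖β‖₁, and let σ̂²_naive = (1/n)·‖y − Xβ̂_λ‖₂². Then with probability at least 1 − 1/p, |σ̂²_naive − (1/n)·‖ε‖₂²| ≤ 16·σ·‖β*‖₁·√(log p / n). -/

import Mathlib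

open MeasureTheory ProbabilityTheory Matrix
open scoped ENNReal

noncomputable section

/-- squared Euclidean norm on ℝⁿ -/
def l2sq {n : ℕ} (v : Fin n → ℝ) : ℝ := ∑ i, (v i) ^ 2

/-- ℓ₁ norm on ℝᵖ -/
def l1 {p : ℕ} (b : Fin p → ℝ) : ℝ := ∑ j, |b j|

/-- sup norm on ℝᵖ -/
def linf {p : ℕ} (v : Fin p → ℝ) : ℝ := ⨆ j, |v j|

open scoped NNReal

/-! On the event that every correlation `|⟨Xⱼ, ε⟩|` is at most `nλ/2`, comparing the lasso
objective at `β̂` with its value at `β*` and writing `r = β̂ - β*` gives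
`σ̂² - ‖ε‖²/n ≤ 2λ‖β*‖₁ - 2λ‖β̂‖₁`, while Hölder's inequality gives `σ̂² - ‖ε‖²/n ≥ -λ‖r‖₁`;
as `‖r‖₁ ≤ ‖β̂‖₁ + ‖β*‖₁`, together they give `|σ̂² - ‖ε‖²/n| ≤ 4λ‖β*‖₁`.
Each `⟨Xⱼ, ε⟩` is `N(0, nσ²)`, and a centred Gaussian `Z` of variance `s` satisfies
`P(Z > t) ≤ exp(-t²/(2s))/2` (compare its density with that of `N(t, s)`), so each of the `2p`
one-sided failure events has probability at most `1/(2p²)` at `t = nλ/2`. -/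

def lassoObjective {n p : ℕ} (X : Matrix (Fin n) (Fin p) ℝ) (y : Fin n → ℝ) (lam : ℝ)
    (β : Fin p → ℝ) : ℝ :=
  (1 / n) * l2sq (y - X *ᵥ β) + 2 * lam * l1 β

lemma l1_nonneg {p : ℕ} (b : Fin p → ℝ) : 0 ≤ l1 b :=
  Finset.sum_nonneg fun _ _ => abs_nonneg _

lemma l1_sub_le {p : ℕ} (b b' : Fin p → ℝ) : l1 (b - b') ≤ l1 b + l1 b' := by
  rw [l1, l1, l1, ← Finset.sum_add_distrib]
  exact Finset.sum_le_sum fun j _ => abs_sub (b j) (b' j)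

lemma abs_dotProduct_le_mul_l1 {p : ℕ} {u : Fin p → ℝ} {K : ℝ} (hu : ∀ j, |u j| ≤ K)
    (r : Fin p → ℝ) : |u ⬝ᵥ r| ≤ K * l1 r := by
  rw [l1, Finset.mul_sum]
  refine (Finset.abs_sum_le_sum_abs _ _).trans (Finset.sum_le_sum fun j _ => ?_)
  rw [abs_mul]
  exact mul_le_mul_of_nonneg_right (hu j) (abs_nonneg _)

lemma l2sq_eq_dotProduct {n : ℕ} (v : Fin n → ℝ) : l2sq v = v ⬝ᵥ v := by
  simp only [l2sq, dotProduct, sq]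

lemma l2sq_nonneg {n : ℕ} (v : Fin n → ℝ) : 0 ≤ l2sq v := by
  rw [l2sq_eq_dotProduct]
  exact dotProduct_self_star_nonneg v

lemma l2sq_sub {n : ℕ} (u w : Fin n → ℝ) : l2sq (u - w) = l2sq u - 2 * (u ⬝ᵥ w) + l2sq w := by
  simp only [l2sq_eq_dotProduct, sub_dotProduct, dotProduct_sub, dotProduct_comm w u]
  ring

lemma neg_mul_l1_le_l2sq_sub_mulVec_sub_l2sq {n p : ℕ} (hn : 0 < n)
    (X : Matrix (Fin n) (Fin p) ℝ) {e : Fin n → ℝ} {lam : ℝ}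
    (hnoise : ∀ j, |(e ᵥ* X) j| ≤ n * lam / 2) (r : Fin p → ℝ) :
    -(lam * l1 r) ≤ (1 / n) * l2sq (e - X *ᵥ r) - (1 / n) * l2sq e := by
  have hn' : (0 : ℝ) < n := by exact_mod_cast hn
  have hcross : e ⬝ᵥ (X *ᵥ r) ≤ n * lam / 2 * l1 r := by
    rw [dotProduct_mulVec]
    exact (le_abs_self _).trans (abs_dotProduct_le_mul_l1 hnoise r)
  calc -(lam * l1 r) = 0 - 2 / n * (n * lam / 2 * l1 r) := by field_simp; ring
    _ ≤ (1 / n) * l2sq (X *ᵥ r) - 2 / n * (e ⬝ᵥ (X *ᵥ r)) := by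
        gcongr
        exact mul_nonneg (by positivity) (l2sq_nonneg _)
    _ = (1 / n) * l2sq (e - X *ᵥ r) - (1 / n) * l2sq e := by rw [l2sq_sub]; ring

lemma abs_l2sq_residual_sub_l2sq_noise_le {n p : ℕ} (hn : 0 < n) (X : Matrix (Fin n) (Fin p) ℝ)
    {e y : Fin n → ℝ} {βs b : Fin p → ℝ} (hy : y = X *ᵥ βs + e) {lam : ℝ} (hlam : 0 ≤ lam)
    (hnoise : ∀ j, |(e ᵥ* X) j| ≤ n * lam / 2)
    (hb : lassoObjective X y lam b ≤ lassoObjective X y lam βs) :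
    |(1 / n) * l2sq (y - X *ᵥ b) - (1 / n) * l2sq e| ≤ 4 * lam * l1 βs := by
  have hres : y - X *ᵥ b = e - X *ᵥ (b - βs) := by
    rw [hy, mulVec_sub]; abel
  have hres_star : y - X *ᵥ βs = e := by rw [hy]; abel
  rw [lassoObjective, lassoObjective, hres, hres_star] at hb
  rw [hres]
  have hlow := neg_mul_l1_le_l2sq_sub_mulVec_sub_l2sq hn X hnoise (b - βs)
  have htri := mul_le_mul_of_nonneg_left (l1_sub_le b βs) hlam
  have hb_nonneg := mul_nonneg hlam (l1_nonneg b)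
  have hβs_nonneg := mul_nonneg hlam (l1_nonneg βs)
  rw [abs_le]
  constructor <;> linarith

namespace ProbabilityTheory

section GaussianTail

variable {v : ℝ≥0}

lemma gaussianPDFReal_zero_le_exp_mul {a x : ℝ} (ha : 0 ≤ a) (hx : a ≤ x) :
    gaussianPDFReal 0 v x ≤ Real.exp (-(a ^ 2 / (2 * v))) * gaussianPDFReal a v x := by
  rw [gaussianPDFReal, gaussianPDFReal, mul_left_comm, ← Real.exp_add]
  gcongr
  have hgap : 0 ≤ a * (x - a) / v := div_nonneg (mul_nonneg ha (sub_nonneg.2 hx)) v.2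
  have hexpand : -(a ^ 2 / (2 * v)) + -(x - a) ^ 2 / (2 * v)
      = -(x - 0) ^ 2 / (2 * v) + a * (x - a) / v := by
    ring
  linarith

lemma gaussianReal_Ioi_zero_le_half (v : ℝ≥0) : gaussianReal 0 v (Set.Ioi 0) ≤ 1 / 2 := by
  have hsymm : gaussianReal 0 v (Set.Iio 0) = gaussianReal 0 v (Set.Ioi 0) := by
    conv_lhs =>
      rw [← neg_zero, ← gaussianReal_map_neg, Measure.map_apply measurable_neg measurableSet_Iio]
    simp
  have hsum : gaussianReal 0 v (Set.Ioi 0) + gaussianReal 0 v (Set.Iio 0) ≤ 1 := by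
    rw [← measure_union Set.Ioi_disjoint_Iio_same measurableSet_Iio]
    exact prob_le_one
  rw [hsymm, ← two_mul] at hsum
  rw [ENNReal.le_div_iff_mul_le (by simp) (by simp), mul_comm]
  exact hsum

lemma gaussianReal_Ioi_le (hv : v ≠ 0) {a : ℝ} (ha : 0 ≤ a) :
    gaussianReal 0 v (Set.Ioi a) ≤ ENNReal.ofReal (Real.exp (-(a ^ 2 / (2 * v)))) / 2 := by
  set K := ENNReal.ofReal (Real.exp (-(a ^ 2 / (2 * v))))
  have hshift : gaussianReal a v (Set.Ioi a) = gaussianReal 0 v (Set.Ioi 0) := by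
    rw [← zero_add a, ← gaussianReal_map_add_const,
      Measure.map_apply (measurable_add_const a) measurableSet_Ioi]
    simp
  calc gaussianReal 0 v (Set.Ioi a) = ∫⁻ x in Set.Ioi a, gaussianPDF 0 v x :=
        gaussianReal_apply _ hv _
    _ ≤ ∫⁻ x in Set.Ioi a, K * gaussianPDF a v x := by
        refine setLIntegral_mono' measurableSet_Ioi fun x hx => ?_
        rw [gaussianPDF, gaussianPDF, ← ENNReal.ofReal_mul (Real.exp_nonneg _)]
        exact ENNReal.ofReal_le_ofReal (gaussianPDFReal_zero_le_exp_mul ha (le_of_lt hx))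
    _ = K * gaussianReal 0 v (Set.Ioi 0) := by
        rw [lintegral_const_mul _ (measurable_gaussianPDF _ _), ← gaussianReal_apply _ hv, hshift]
    _ ≤ K / 2 := by
        rw [ENNReal.div_eq_inv_mul, mul_comm, ← one_div]
        gcongr
        exact gaussianReal_Ioi_zero_le_half v

end GaussianTail

section GaussianVector

variable {Ω ι : Type*} [MeasurableSpace Ω] {P : Measure Ω} [IsProbabilityMeasure P] [Fintype ι]
  {v : ℝ≥0} {ε : Ω → ι → ℝ}

lemma map_dotProduct_eq_gaussianReal (hmeas : ∀ i, Measurable fun ω => ε ω i)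
    (hgauss : ∀ i, P.map (fun ω => ε ω i) = gaussianReal 0 v)
    (hindep : iIndepFun (fun i ω => ε ω i) P) (c : ι → ℝ) :
    P.map (fun ω => ε ω ⬝ᵥ c) = gaussianReal 0 (v * ∑ i, c i ^ 2).toNNReal := by
  have hlaw : ∀ i, HasLaw (fun ω => ε ω i * c i)
      (gaussianReal (c i * 0) (.mk (c i ^ 2) (sq_nonneg _) * v)) P :=
    fun i => gaussianReal_mul_const ⟨(hmeas i).aemeasurable, hgauss i⟩ (c i)
  have hindep' : iIndepFun (fun i ω => ε ω i * c i) P :=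
    hindep.comp (fun i x => x * c i) fun i => measurable_mul_const (c i)
  have hmem : ∀ i, MemLp (fun ω => ε ω i * c i) 2 P := fun i => (hlaw i).hasGaussianLaw.memLp_two
  have hsum : HasGaussianLaw (fun ω => ∑ i, ε ω i * c i) P :=
    iIndepFun.hasGaussianLaw_fun_sum (fun i => (hlaw i).hasGaussianLaw) hindep'
  have hmean : P[fun ω => ∑ i, ε ω i * c i] = 0 := by
    rw [integral_finsetSum _ fun i _ => (hmem i).integrable one_le_two]
    exact Finset.sum_eq_zero fun i _ => by
      rw [(hlaw i).integral_eq, integral_id_gaussianReal, mul_zero]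
  have hvar : Var[fun ω => ∑ i, ε ω i * c i; P] = v * ∑ i, c i ^ 2 := by
    have := IndepFun.variance_sum (s := Finset.univ) (fun i _ => hmem i)
      fun i _ j _ hij => hindep'.indepFun hij
    rw [Finset.sum_fn] at this
    rw [this, Finset.mul_sum]
    refine Finset.sum_congr rfl fun i _ => ?_
    rw [(hlaw i).variance_eq, variance_id_gaussianReal]
    simp [mul_comm]
  simpa only [dotProduct, hmean, hvar] using hsum.map_eq_gaussianReal

lemma measure_lt_dotProduct_le (hmeas : ∀ i, Measurable fun ω => ε ω i)
    (hgauss : ∀ i, P.map (fun ω => ε ω i) = gaussianReal 0 v)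
    (hindep : iIndepFun (fun i ω => ε ω i) P) (hv : v ≠ 0) {c : ι → ℝ}
    (hc : ∑ i, c i ^ 2 ≠ 0) {a : ℝ} (ha : 0 ≤ a) :
    P {ω | a < ε ω ⬝ᵥ c}
      ≤ ENNReal.ofReal (Real.exp (-(a ^ 2 / (2 * (v * ∑ i, c i ^ 2))))) / 2 := by
  have hvar : 0 < (v : ℝ) * ∑ i, c i ^ 2 := mul_pos (NNReal.coe_pos.2 (pos_iff_ne_zero.2 hv))
    ((Finset.sum_nonneg fun i _ => sq_nonneg _).lt_of_ne hc.symm)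
  have hf : Measurable fun ω => ε ω ⬝ᵥ c := by fun_prop
  change P ((fun ω => ε ω ⬝ᵥ c) ⁻¹' Set.Ioi a) ≤ _
  rw [← Measure.map_apply hf measurableSet_Ioi,
    map_dotProduct_eq_gaussianReal hmeas hgauss hindep c]
  simpa [hvar.le] using gaussianReal_Ioi_le (Real.toNNReal_pos.2 hvar).ne' ha

lemma measure_exists_lt_abs_dotProduct_le {κ : Type*} [Fintype κ]
    (hmeas : ∀ i, Measurable fun ω => ε ω i)
    (hgauss : ∀ i, P.map (fun ω => ε ω i) = gaussianReal 0 v)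
    (hindep : iIndepFun (fun i ω => ε ω i) P) (hv : v ≠ 0) {C : κ → ι → ℝ} {s : ℝ}
    (hC : ∀ j, ∑ i, C j i ^ 2 = s) (hs : s ≠ 0) {a : ℝ} (ha : 0 ≤ a) :
    P {ω | ∃ j, a < |ε ω ⬝ᵥ C j|}
      ≤ Fintype.card κ * ENNReal.ofReal (Real.exp (-(a ^ 2 / (2 * (v * s))))) := by
  set K := ENNReal.ofReal (Real.exp (-(a ^ 2 / (2 * (v * s)))))
  have htail : ∀ c : ι → ℝ, ∑ i, c i ^ 2 = s → P {ω | a < ε ω ⬝ᵥ c} ≤ K / 2 := fun c hc => by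
    have := measure_lt_dotProduct_le hmeas hgauss hindep hv (hc.symm ▸ hs) ha
    rwa [hc] at this
  have hsplit : {ω | ∃ j, a < |ε ω ⬝ᵥ C j|}
      = ⋃ j, ({ω | a < ε ω ⬝ᵥ C j} ∪ {ω | a < ε ω ⬝ᵥ -C j}) := by
    ext ω
    simp [lt_abs, dotProduct_neg]
  calc P {ω | ∃ j, a < |ε ω ⬝ᵥ C j|}
      ≤ ∑ j, (P {ω | a < ε ω ⬝ᵥ C j} + P {ω | a < ε ω ⬝ᵥ -C j}) := by
        rw [hsplit]
        exact (measure_iUnion_fintype_le _ _).trans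
          (Finset.sum_le_sum fun j _ => measure_union_le _ _)
    _ ≤ ∑ _j : κ, (K / 2 + K / 2) := by
        gcongr with j
        · exact htail _ (hC j)
        · exact htail _ (by simpa only [Pi.neg_apply, neg_sq] using hC j)
    _ = Fintype.card κ * K := by simp [ENNReal.add_halves]

end GaussianVector

end ProbabilityTheory

lemma natCast_mul_ofReal_exp_neg_two_mul_log {p : ℕ} (hp : p ≠ 0) :
    (p : ℝ≥0∞) * ENNReal.ofReal (Real.exp (-(2 * Real.log p))) = 1 / p := by
  have hp' : (0 : ℝ) < p := by positivity
  have hexp : Real.exp (-(2 * Real.log p)) = (p : ℝ)⁻¹ * (p : ℝ)⁻¹ := by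
    rw [show -(2 * Real.log p) = -Real.log p + -Real.log p by ring, Real.exp_add, Real.exp_neg,
      Real.exp_log hp']
  rw [hexp, ENNReal.ofReal_mul (by positivity), ENNReal.ofReal_inv_of_pos hp',
    ENNReal.ofReal_natCast, ← mul_assoc, ENNReal.mul_inv_cancel (by exact_mod_cast hp)
    (ENNReal.natCast_ne_top p), one_mul, one_div]

/-- slow-rate high-probability bound for the naive estimator based on the
lasso with λ = 4σ√(log p / n). -/
theorem naive_lasso_slow_rate {n p : ℕ} (hn : 0 < n) (hp : 2 ≤ p)
    (X : Matrix (Fin n) (Fin p) ℝ) (hX : ∀ j, ∑ i, (X i j)^2 = (n : ℝ))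
    (σ : ℝ) (hσ : 0 < σ)
    {Ω : Type} [MeasureSpace Ω] [IsProbabilityMeasure (ℙ : Measure Ω)]
    (ε : Ω → Fin n → ℝ)
    (hmeas : ∀ i, Measurable (fun ω => ε ω i))
    (hgauss : ∀ i, Measure.map (fun ω => ε ω i) ℙ = gaussianReal 0 ⟨σ^2, sq_nonneg σ⟩)
    (hindep : iIndepFun (fun i ω => ε ω i) ℙ)
    (βstar : Fin p → ℝ) (y : Ω → Fin n → ℝ)
    (hy : ∀ ω, y ω = X.mulVec βstar + ε ω)
    (lam : ℝ) (hlam : lam = 4 * σ * Real.sqrt (Real.log p / n))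
    (βhat : Ω → Fin p → ℝ)
    (hβhat : ∀ ω (β : Fin p → ℝ),
      (1/n) * l2sq (y ω - X.mulVec (βhat ω)) + 2*lam * l1 (βhat ω)
        ≤ (1/n) * l2sq (y ω - X.mulVec β) + 2*lam * l1 β) :
    1 - 1/(p : ℝ≥0∞)
      ≤ ℙ {ω | |(1/n) * l2sq (y ω - X.mulVec (βhat ω)) - (1/n) * l2sq (ε ω)|
          ≤ 16 * σ * l1 βstar * Real.sqrt (Real.log p / n)} := by
  have hn' : (0 : ℝ) < n := by exact_mod_cast hn
  have hlam0 : 0 ≤ lam := by rw [hlam]; positivity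
  set v : ℝ≥0 := ⟨σ ^ 2, sq_nonneg σ⟩
  have hv : (v : ℝ) = σ ^ 2 := rfl
  have hv0 : v ≠ 0 := by
    rw [← NNReal.coe_ne_zero, hv]; positivity
  set bad := {ω | ∃ j, n * lam / 2 < |ε ω ⬝ᵥ X.col j|}
  have hexponent : (n * lam / 2) ^ 2 / (2 * (σ ^ 2 * n)) = 2 * Real.log p := by
    have hsq : Real.sqrt (Real.log p / n) ^ 2 = Real.log p / n := Real.sq_sqrt (by positivity)
    rw [hlam, div_pow, mul_pow, mul_pow, hsq]
    field_simp
    ring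
  have hbad : ℙ bad ≤ 1 / p := by
    have := measure_exists_lt_abs_dotProduct_le hmeas hgauss hindep hv0 (C := X.col) hX hn'.ne'
      (by positivity : 0 ≤ (n : ℝ) * lam / 2)
    rwa [Fintype.card_fin, hv, hexponent, natCast_mul_ofReal_exp_neg_two_mul_log (by omega)] at this
  have hgood : badᶜ ⊆ {ω | |(1/n) * l2sq (y ω - X.mulVec (βhat ω)) - (1/n) * l2sq (ε ω)|
      ≤ 16 * σ * l1 βstar * Real.sqrt (Real.log p / n)} := by
    intro ω hω
    simp only [bad, Set.mem_compl_iff, Set.mem_ofPred_eq, not_exists, not_lt] at hω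
    have hdev := abs_l2sq_residual_sub_l2sq_noise_le hn X (hy ω) hlam0 hω (hβhat ω βstar)
    rw [hlam] at hdev
    simp only [Set.mem_ofPred_eq]
    linarith
  calc 1 - 1 / (p : ℝ≥0∞) ≤ ℙ badᶜ := by
        rw [prob_compl_eq_one_sub (by measurability)]
        exact tsub_le_tsub_left hbad 1
    _ ≤ _ := measure_mono hgood
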